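/- Every optimal measure on a σ-algebra 𝓑 is essential; consequently it is σ-principal, satisfies the countable chain condition, and is autocontinuous. -/

import Mathlib

open scoped ENNReal
open Set Filter MeasureTheory

variable {E : Type*}

/-- `f : E → [0,∞]` is `𝓑`-measurable: `{f > t}` is measurable for every `t`. -/
def Premeasurable [MeasurableSpace E] (f : E → ℝ≥0∞) : Prop :=
  ∀ t : ℝ≥0∞, MeasurableSet {x | t < f x}

/-- A maxitive measure on the σ-algebra of measurable subsets of `E`. -/
def Maxitive [MeasurableSpace E] (ν : Set E → ℝ≥0∞) : Prop :=
  ν ∅ = 0 ∧ ∀ A B : Set E, MeasurableSet A → MeasurableSet B →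
    ν (A ∪ B) = max (ν A) (ν B)

/-- A σ-maxitive measure: a maxitive measure commuting with countable nondecreasing unions. -/
def SigmaMaxitive [MeasurableSpace E] (ν : Set E → ℝ≥0∞) : Prop :=
  Maxitive ν ∧ ∀ B : ℕ → Set E, (∀ n, MeasurableSet (B n)) → Monotone B →
    ν (⋃ n, B n) = ⨆ n, ν (B n)

/-- `N` is `τ`-negligible: it is contained in a measurable set of `τ`-measure zero. -/
def Negligible [MeasurableSpace E] (τ : Set E → ℝ≥0∞) (N : Set E) : Prop :=
  ∃ B : Set E, MeasurableSet B ∧ N ⊆ B ∧ τ B = 0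

/-- The `τ`-essential supremum of `f` over `B`: `inf { t > 0 : B ∩ {f > t} is τ-negligible }`. -/
noncomputable def essSupOn [MeasurableSpace E] (τ : Set E → ℝ≥0∞) (f : E → ℝ≥0∞)
    (B : Set E) : ℝ≥0∞ :=
  sInf {t : ℝ≥0∞ | 0 < t ∧ Negligible τ (B ∩ {x | t < f x})}

/-- `ν ≪ τ`: absolute continuity. -/
def AbsCont [MeasurableSpace E] (ν τ : Set E → ℝ≥0∞) : Prop :=
  ∀ B : Set E, MeasurableSet B → τ B = 0 → ν B = 0

/-- `ν ⋘ τ`: strong absolute continuity, i.e. `ν` has a measurable relative density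
with respect to `τ`. -/
def StrongAbsCont [MeasurableSpace E] (ν τ : Set E → ℝ≥0∞) : Prop :=
  ∃ f : E → ℝ≥0∞, Premeasurable f ∧ ∀ B : Set E, MeasurableSet B → ν B = essSupOn τ f B

/-- `c` is a cardinal density of `ν`: `ν B = sup_{x ∈ B} c x` for every measurable `B`. -/
def IsCardinalDensity [MeasurableSpace E] (ν : Set E → ℝ≥0∞) (c : E → ℝ≥0∞) : Prop :=
  ∀ B : Set E, MeasurableSet B → ν B = ⨆ x ∈ B, c x

/-- `τ` is essential: there exists a σ-finite σ-additive measure `m` with the same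
null measurable sets. -/
def Essential [MeasurableSpace E] (τ : Set E → ℝ≥0∞) : Prop :=
  ∃ m : Measure E, SigmaFinite m ∧ ∀ B : Set E, MeasurableSet B → (0 < τ B ↔ 0 < m B)

/-- A σ-ideal of the σ-algebra of measurable sets. -/
def SigmaIdeal [MeasurableSpace E] (I : Set (Set E)) : Prop :=
  I.Nonempty ∧ (∀ S ∈ I, MeasurableSet S) ∧
  (∀ f : ℕ → Set E, (∀ n, f n ∈ I) → (⋃ n, f n) ∈ I) ∧
  (∀ B S : Set E, MeasurableSet B → S ∈ I → B ⊆ S → B ∈ I)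

/-- `τ` is σ-principal: every σ-ideal has a greatest element modulo `τ`-negligible sets. -/
def SigmaPrincipal [MeasurableSpace E] (τ : Set E → ℝ≥0∞) : Prop :=
  ∀ I : Set (Set E), SigmaIdeal I → ∃ L ∈ I, ∀ S ∈ I, Negligible τ (S \ L)

/-- A pseudo-multiplication on `[0,∞]`. -/
structure PseudoMul where
  op : ℝ≥0∞ → ℝ≥0∞ → ℝ≥0∞
  assoc : ∀ a b c, op (op a b) c = op a (op b c)
  contOn : ContinuousOn (fun q : ℝ≥0∞ × ℝ≥0∞ => op q.1 q.2) (Set.Ioo 0 ⊤ ×ˢ Set.univ)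
  contLeft : ∀ t, ContinuousOn (fun s => op s t) (Set.Ioi 0)
  monoLeft : ∀ t, Monotone fun s => op s t
  monoRight : ∀ s, Monotone (op s)
  one : ℝ≥0∞
  one_op : ∀ t, op one t = t
  eq_zero : ∀ s t, op s t = 0 → s = 0 ∨ t = 0
  zero_op : ∀ t, op 0 t = 0
  op_zero : ∀ t, op t 0 = 0

/-- `t` is `⊙`-finite: `inf_{s > 0} s ⊙ t = 0`. -/
def OdotFinite (p : PseudoMul) (t : ℝ≥0∞) : Prop :=
  (⨅ s ∈ Set.Ioi (0 : ℝ≥0∞), p.op s t) = 0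

/-- The idempotent `⊙`-integral `∫_B f ⊙ dτ = sup_{t ∈ [0,∞)} t ⊙ τ (B ∩ {f > t})`. -/
noncomputable def iInt [MeasurableSpace E] (p : PseudoMul) (τ : Set E → ℝ≥0∞)
    (f : E → ℝ≥0∞) (B : Set E) : ℝ≥0∞ :=
  ⨆ t ∈ Set.Iio (⊤ : ℝ≥0∞), p.op t (τ (B ∩ {x | t < f x}))

/-- `ν ≪_⊙ τ`: `ν B ≤ ∞ ⊙ τ B` for every measurable `B`. -/
def OdotAbsCont [MeasurableSpace E] (p : PseudoMul) (ν τ : Set E → ℝ≥0∞) : Prop :=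
  ∀ B : Set E, MeasurableSet B → ν B ≤ p.op ⊤ (τ B)

/-- `ν` is semi-`⊙`-finite. -/
def SemiOdotFinite [MeasurableSpace E] (p : PseudoMul) (ν : Set E → ℝ≥0∞) : Prop :=
  ∀ B : Set E, MeasurableSet B →
    ν B = ⨆ A ∈ {A : Set E | MeasurableSet A ∧ A ⊆ B ∧ OdotFinite p (ν A)}, ν A

/-- `τ` is σ-`⊙`-finite. -/
def SigmaOdotFinite [MeasurableSpace E] (p : PseudoMul) (τ : Set E → ℝ≥0∞) : Prop :=
  ∃ B : ℕ → Set E, (∀ n, MeasurableSet (B n)) ∧ (⋃ n, B n) = Set.univ ∧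
    ∀ n, OdotFinite p (τ (B n))

/-- Continuity from below. -/
def ContFromBelow [MeasurableSpace E] (ν : Set E → ℝ≥0∞) : Prop :=
  ∀ B : ℕ → Set E, (∀ n, MeasurableSet (B n)) → Monotone B →
    Tendsto (fun n => ν (B n)) atTop (nhds (ν (⋃ n, B n)))

/-- Continuity from above (no finiteness assumption). -/
def ContFromAbove [MeasurableSpace E] (ν : Set E → ℝ≥0∞) : Prop :=
  ∀ B : ℕ → Set E, (∀ n, MeasurableSet (B n)) → Antitone B →
    Tendsto (fun n => ν (B n)) atTop (nhds (ν (⋂ n, B n)))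

/-- An optimal measure: a maxitive measure continuous from below and from above. -/
def Optimal [MeasurableSpace E] (ν : Set E → ℝ≥0∞) : Prop :=
  Maxitive ν ∧ ContFromBelow ν ∧ ContFromAbove ν

/-- `ν` satisfies the countable chain condition: every pairwise disjoint family of
non-`ν`-negligible measurable sets is countable. -/
def CCC [MeasurableSpace E] (ν : Set E → ℝ≥0∞) : Prop :=
  ∀ 𝓐 : Set (Set E), (∀ A ∈ 𝓐, MeasurableSet A ∧ ¬ Negligible ν A) →
    𝓐.Pairwise Disjoint → 𝓐.Countable

/-!
Continuity from above turns maxitivity into countable maxitivity with attained suprema: the value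
of a countable union is the value of one of its members, and along a disjoint sequence the values
tend to `0`. Hence disjoint families of sets of value `≥ t > 0` are finite, which gives the
countable chain condition, and a maximal disjoint family inside a σ-ideal is countable, so its
union is a greatest element of the ideal up to null sets.

The same "no infinite disjoint sequence" argument shows that every set of value `≥ t` contains a
`t`-atom, a set that cannot be split into two disjoint parts of value `≥ t`; on a `t`-atom `A`,
`B ↦ [t ≤ ν (A ∩ B)]` is a σ-additive `{0,1}`-valued measure. A positively weighted sum of these
measures over countable maximal disjoint families of `1/n`-atoms has the same null sets as `ν`.
Finally, if `L q` is a greatest element of the σ-ideal `{ν ≤ q}` for each rational `q`, then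
`x ↦ inf {q | x ∈ L q}` is a density of `ν` with respect to itself.
-/

open Function

section DisjointFamilies

variable {α : Type*}

theorem exists_maximal_pairwise_disjoint (P : Set α → Prop) :
    ∃ 𝓓 : Set (Set α), (∀ A ∈ 𝓓, P A) ∧ 𝓓.Pairwise Disjoint ∧
      ∀ A, P A → (∀ D ∈ 𝓓, Disjoint A D) → A ∈ 𝓓 := by
  set 𝓢 := {𝓕 : Set (Set α) | (∀ A ∈ 𝓕, P A) ∧ 𝓕.Pairwise Disjoint}
  obtain ⟨𝓓, h𝓓⟩ := zorn_subset 𝓢 fun c hc hchain =>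
    ⟨⋃₀ c, ⟨fun A ⟨𝓕, h𝓕, hA⟩ => (hc h𝓕).1 A hA,
      (pairwise_sUnion hchain.directedOn).2 fun 𝓕 h𝓕 => (hc h𝓕).2⟩,
      fun _ => subset_sUnion_of_mem⟩
  refine ⟨𝓓, h𝓓.prop.1, h𝓓.prop.2, fun A hA hdisj => ?_⟩
  have hins : insert A 𝓓 ∈ 𝓢 :=
    ⟨forall_mem_insert.2 ⟨hA, h𝓓.prop.1⟩,
      h𝓓.prop.2.insert fun D hD _ => ⟨hdisj D hD, (hdisj D hD).symm⟩⟩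
  exact h𝓓.eq_of_subset hins (subset_insert A 𝓓) ▸ mem_insert A 𝓓

theorem exists_pairwise_disjoint_seq_of_forall_split {S : Set (Set α)}
    (hsplit : ∀ R ∈ S, ∃ C ∈ S, ∃ D ∈ S, C ⊆ R ∧ D ⊆ R ∧ Disjoint C D)
    {B : Set α} (hB : B ∈ S) :
    ∃ C : ℕ → Set α, (∀ n, C n ∈ S) ∧ Pairwise (Disjoint on C) := by
  choose! piece hpiece rest hrest hpiece_sub hrest_sub hdisj using hsplit
  set R : ℕ → Set α := fun n => rest^[n] B
  have hR_succ : ∀ n, R (n + 1) = rest (R n) := fun n => iterate_succ_apply' rest n B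
  have hR : ∀ n, R n ∈ S := fun n => by
    induction n with
    | zero => exact hB
    | succ n ih => exact hR_succ n ▸ hrest _ ih
  have hR_anti : Antitone R :=
    antitone_nat_of_succ_le fun n => hR_succ n ▸ hrest_sub _ (hR n)
  refine ⟨fun n => piece (R n), fun n => hpiece _ (hR n), (pairwise_disjoint_on _).2 ?_⟩
  intro i j hij
  have hj : piece (R j) ⊆ rest (R i) :=
    (hpiece_sub _ (hR j)).trans (hR_succ i ▸ hR_anti (Nat.succ_le_of_lt hij))
  exact (hdisj _ (hR i)).mono_right hj

end DisjointFamilies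

namespace Maxitive

variable [MeasurableSpace E] {ν : Set E → ℝ≥0∞}

theorem mono (hm : Maxitive ν) {A B : Set E} (hA : MeasurableSet A) (hB : MeasurableSet B)
    (hAB : A ⊆ B) : ν A ≤ ν B := by
  rw [← union_eq_self_of_subset_left hAB, hm.2 A B hA hB]
  exact le_max_left _ _

theorem negligible_iff (hm : Maxitive ν) {B : Set E} (hB : MeasurableSet B) :
    Negligible ν B ↔ ν B = 0 :=
  ⟨fun ⟨_, hN, hBN, hN0⟩ => le_antisymm (hN0 ▸ hm.mono hB hN hBN) zero_le,
    fun h => ⟨B, hB, subset_rfl, h⟩⟩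

theorem measure_biUnion_finset (hm : Maxitive ν) {ι : Type*} {f : ι → Set E}
    (hf : ∀ i, MeasurableSet (f i)) (s : Finset ι) :
    ν (⋃ i ∈ s, f i) = s.sup fun i => ν (f i) := by
  classical
  induction s using Finset.induction_on with
  | empty => simp [hm.1]
  | insert i s _ ih =>
    rw [Finset.set_biUnion_insert, Finset.sup_insert,
      hm.2 _ _ (hf i) (Finset.measurableSet_biUnion s fun j _ => hf j), ih]

theorem exists_measure_iUnion_le (hm : Maxitive ν) (hca : ContFromAbove ν) {f : ℕ → Set E}
    (hf : ∀ n, MeasurableSet (f n)) : ∃ i, ν (⋃ n, f n) ≤ ν (f i) := by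
  by_contra! hlt
  set U := ⋃ n, f n
  set F : ℕ → Set E := fun n => ⋃ i ∈ Finset.range n, f i
  have hFm : ∀ n, MeasurableSet (F n) := fun n =>
    Finset.measurableSet_biUnion _ fun i _ => hf i
  set G : ℕ → Set E := fun n => U \ F n
  have hGm : ∀ n, MeasurableSet (G n) := fun n => (MeasurableSet.iUnion hf).diff (hFm n)
  have hG_anti : Antitone G := fun m n hmn =>
    sdiff_subset_sdiff_right (biUnion_subset_biUnion_left (by simpa using Finset.range_mono hmn))
  have hG_empty : ⋂ n, G n = ∅ := eq_empty_of_forall_notMem fun x hx => by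
    obtain ⟨i, hi⟩ := mem_iUnion.1 (mem_iInter.1 hx 0).1
    exact (mem_iInter.1 hx (i + 1)).2 (mem_iUnion₂.2 ⟨i, Finset.self_mem_range_succ i, hi⟩)
  have hU_pos : 0 < ν U := zero_le.trans_lt (hlt 0)
  have hlim := hca G hGm hG_anti
  rw [hG_empty, hm.1] at hlim
  obtain ⟨n, hn⟩ := (hlim.eventually (gt_mem_nhds hU_pos)).exists
  have hU_le : ν U ≤ max (ν (F n)) (ν (G n)) := by
    rw [← hm.2 _ _ (hFm n) (hGm n), union_sdiff_self]
    exact hm.mono (MeasurableSet.iUnion hf) ((hFm n).union (MeasurableSet.iUnion hf))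
      subset_union_right
  have hF_lt : ν (F n) < ν U := by
    rw [hm.measure_biUnion_finset hf, Finset.sup_lt_iff hU_pos]
    exact fun i _ => hlt i
  exact lt_irrefl _ (hU_le.trans_lt (max_lt hF_lt hn))

theorem measure_biUnion_lt (hm : Maxitive ν) (hca : ContFromAbove ν) {ι : Type*} {s : Set ι}
    (hs : s.Countable) {f : ι → Set E} (hf : ∀ i ∈ s, MeasurableSet (f i)) {c : ℝ≥0∞}
    (hc : 0 < c) (hlt : ∀ i ∈ s, ν (f i) < c) : ν (⋃ i ∈ s, f i) < c := by
  rcases s.eq_empty_or_nonempty with rfl | hne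
  · simpa [hm.1] using hc
  obtain ⟨g, rfl⟩ := hs.exists_eq_range hne
  rw [biUnion_range]
  obtain ⟨n, hn⟩ := hm.exists_measure_iUnion_le hca fun n => hf _ (mem_range_self n)
  exact hn.trans_lt (hlt _ (mem_range_self n))

theorem tendsto_measure_of_pairwise_disjoint (hm : Maxitive ν) (hca : ContFromAbove ν)
    {C : ℕ → Set E} (hC : ∀ n, MeasurableSet (C n)) (hd : Pairwise (Disjoint on C)) :
    Tendsto (fun n => ν (C n)) atTop (nhds 0) := by
  set G : ℕ → Set E := fun n => ⋃ k ≥ n, C k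
  have hGm : ∀ n, MeasurableSet (G n) := fun n =>
    MeasurableSet.iUnion fun k => MeasurableSet.iUnion fun _ => hC k
  have hG_anti : Antitone G := fun m n hmn =>
    biUnion_subset_biUnion_left fun k hk => le_trans hmn hk
  have hG_empty : ⋂ n, G n = ∅ := eq_empty_of_forall_notMem fun x hx => by
    obtain ⟨i, -, hi⟩ := mem_iUnion₂.1 (mem_iInter.1 hx 0)
    obtain ⟨j, hj, hj'⟩ := mem_iUnion₂.1 (mem_iInter.1 hx (i + 1))
    exact disjoint_left.1 (hd (by omega : i ≠ j)) hi hj'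
  have hlim := hca G hGm hG_anti
  rw [hG_empty, hm.1] at hlim
  exact tendsto_of_tendsto_of_tendsto_of_le_of_le tendsto_const_nhds hlim (fun _ => zero_le)
    fun n => hm.mono (hC n) (hGm n) (subset_iUnion₂ (s := fun k (_ : k ≥ n) => C k) n le_rfl)

theorem finite_of_pairwise_disjoint_of_le_measure (hm : Maxitive ν) (hca : ContFromAbove ν)
    {t : ℝ≥0∞} (ht : 0 < t) {𝓐 : Set (Set E)} (hmeas : ∀ A ∈ 𝓐, MeasurableSet A)
    (hd : 𝓐.Pairwise Disjoint) (hle : ∀ A ∈ 𝓐, t ≤ ν A) : 𝓐.Finite := by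
  by_contra hinf
  set g := Set.Infinite.natEmbedding 𝓐 hinf
  have hgd : Pairwise (Disjoint on fun n => (g n : Set E)) := fun i j hij =>
    hd (g i).2 (g j).2 (Subtype.coe_injective.ne (g.injective.ne hij))
  obtain ⟨n, hn⟩ := ((hm.tendsto_measure_of_pairwise_disjoint hca (fun n => hmeas _ (g n).2)
    hgd).eventually (gt_mem_nhds ht)).exists
  exact (hle _ (g n).2).not_gt hn

theorem ccc (hm : Maxitive ν) (hca : ContFromAbove ν) : CCC ν := by
  intro 𝓐 h𝓐 hd
  have hcover : 𝓐 ⊆ ⋃ n : ℕ, {A ∈ 𝓐 | (n : ℝ≥0∞)⁻¹ ≤ ν A} := fun A hA => by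
    have hA0 : ν A ≠ 0 := fun h0 => (h𝓐 A hA).2 ((hm.negligible_iff (h𝓐 A hA).1).2 h0)
    obtain ⟨n, hn⟩ := ENNReal.exists_inv_nat_lt hA0
    exact mem_iUnion.2 ⟨n, hA, hn.le⟩
  refine (countable_iUnion fun n => ?_).mono hcover
  exact (hm.finite_of_pairwise_disjoint_of_le_measure hca
    (ENNReal.inv_pos.2 (ENNReal.natCast_ne_top n)) (fun A hA => (h𝓐 A hA.1).1)
    (hd.mono fun _ hA => hA.1) fun _ hA => hA.2).countable

end Maxitive

namespace SigmaIdeal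

variable [MeasurableSpace E] {I : Set (Set E)}

theorem empty_mem (hI : SigmaIdeal I) : ∅ ∈ I :=
  let ⟨S, hS⟩ := hI.1
  hI.2.2.2 ∅ S MeasurableSet.empty hS (empty_subset S)

theorem sUnion_mem (hI : SigmaIdeal I) {𝓒 : Set (Set E)} (hc : 𝓒.Countable) (hsub : 𝓒 ⊆ I) :
    ⋃₀ 𝓒 ∈ I := by
  obtain ⟨f, hf⟩ := (hc.insert ∅).exists_eq_range (insert_nonempty ∅ 𝓒)
  have hU : ⋃₀ 𝓒 = ⋃ n, f n := by rw [← sUnion_range, ← hf, sUnion_insert, empty_union]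
  rw [hU]
  exact hI.2.2.1 f fun n => insert_subset hI.empty_mem hsub (hf ▸ mem_range_self n)

end SigmaIdeal

namespace Maxitive

variable [MeasurableSpace E] {ν : Set E → ℝ≥0∞}

theorem sigmaPrincipal (hm : Maxitive ν) (hca : ContFromAbove ν) : SigmaPrincipal ν := by
  intro I hI
  obtain ⟨𝓓, h𝓓, hd, hmax⟩ := exists_maximal_pairwise_disjoint fun A => A ∈ I ∧ 0 < ν A
  have hcount : 𝓓.Countable := hm.ccc hca 𝓓 (fun A hA => ⟨hI.2.1 A (h𝓓 A hA).1, fun hA0 =>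
    ((hm.negligible_iff (hI.2.1 A (h𝓓 A hA).1)).1 hA0 ▸ (h𝓓 A hA).2).false⟩) hd
  have hL : ⋃₀ 𝓓 ∈ I := hI.sUnion_mem hcount fun A hA => (h𝓓 A hA).1
  refine ⟨⋃₀ 𝓓, hL, fun S hS => ?_⟩
  have hdiff : MeasurableSet (S \ ⋃₀ 𝓓) := (hI.2.1 S hS).diff (hI.2.1 _ hL)
  rw [hm.negligible_iff hdiff]
  by_contra hne
  have hmem : S \ ⋃₀ 𝓓 ∈ 𝓓 :=
    hmax _ ⟨hI.2.2.2 _ S hdiff hS sdiff_subset, pos_iff_ne_zero.2 hne⟩ fun D hD =>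
      disjoint_sdiff_left.mono_right (subset_sUnion_of_mem hD)
  have hempty : S \ ⋃₀ 𝓓 = ∅ :=
    disjoint_self.1 (disjoint_sdiff_left.mono_right (subset_sUnion_of_mem hmem))
  exact hne (by rw [hempty, hm.1])

end Maxitive

section Atoms

variable [MeasurableSpace E] {ν : Set E → ℝ≥0∞} {t : ℝ≥0∞}

def IsAtomAt (ν : Set E → ℝ≥0∞) (t : ℝ≥0∞) (A : Set E) : Prop :=
  MeasurableSet A ∧ t ≤ ν A ∧ ∀ C D : Set E, MeasurableSet C → MeasurableSet D → C ⊆ A → D ⊆ A →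
    Disjoint C D → t ≤ ν C → ν D < t

theorem Maxitive.exists_isAtomAt_subset (hm : Maxitive ν) (hca : ContFromAbove ν) (ht : 0 < t)
    {B : Set E} (hB : MeasurableSet B) (htB : t ≤ ν B) : ∃ A ⊆ B, IsAtomAt ν t A := by
  by_contra! hno
  set S := {R : Set E | MeasurableSet R ∧ R ⊆ B ∧ t ≤ ν R}
  have hsplit : ∀ R ∈ S, ∃ C ∈ S, ∃ D ∈ S, C ⊆ R ∧ D ⊆ R ∧ Disjoint C D := by
    rintro R ⟨hR, hRB, htR⟩
    have hR_split := hno R hRB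
    simp only [IsAtomAt, not_and, not_forall, not_lt] at hR_split
    obtain ⟨C, D, hC, hD, hCR, hDR, hCD, htC, htD⟩ := hR_split hR htR
    exact ⟨C, ⟨hC, hCR.trans hRB, htC⟩, D, ⟨hD, hDR.trans hRB, htD⟩, hCR, hDR, hCD⟩
  obtain ⟨C, hCS, hd⟩ := exists_pairwise_disjoint_seq_of_forall_split hsplit ⟨hB, subset_rfl, htB⟩
  obtain ⟨n, hn⟩ := ((hm.tendsto_measure_of_pairwise_disjoint hca (fun n => (hCS n).1)
    hd).eventually (gt_mem_nhds ht)).exists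
  exact (hCS n).2.2.not_gt hn

theorem IsAtomAt.exists_measure (hm : Maxitive ν) (hca : ContFromAbove ν) (ht : 0 < t)
    {A : Set E} (hA : IsAtomAt ν t A) :
    ∃ μ : Measure E, ∀ B, MeasurableSet B → μ B = if t ≤ ν (A ∩ B) then 1 else 0 := by
  obtain ⟨hAm, -, hsplit⟩ := hA
  refine ⟨Measure.ofMeasurable (fun B _ => if t ≤ ν (A ∩ B) then 1 else 0)
    (by simp [hm.1, ht.not_ge]) fun f hf hd => ?_, fun B hB => Measure.ofMeasurable_apply B hB⟩
  have hAf : ∀ n, MeasurableSet (A ∩ f n) := fun n => hAm.inter (hf n)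
  by_cases hU : t ≤ ν (A ∩ ⋃ n, f n)
  · obtain ⟨i, hi⟩ := hm.exists_measure_iUnion_le hca hAf
    rw [inter_iUnion] at hU
    have hti : t ≤ ν (A ∩ f i) := hU.trans hi
    have hother : ∀ j ≠ i, ¬ t ≤ ν (A ∩ f j) := fun j hji htj =>
      (hsplit _ _ (hAf i) (hAf j) inter_subset_left inter_subset_left
        ((hd hji.symm).mono inter_subset_right inter_subset_right) hti).not_ge htj
    rw [if_pos (by rwa [inter_iUnion]), tsum_eq_single i fun j hji => if_neg (hother j hji),
      if_pos hti]
  · rw [if_neg hU, eq_comm, ENNReal.tsum_eq_zero]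
    exact fun n => if_neg fun hn => hU (hn.trans (hm.mono (hAf n) (hAm.inter (.iUnion hf))
      (inter_subset_inter_right A (subset_iUnion f n))))

theorem Maxitive.exists_mem_le_measure_inter (hm : Maxitive ν) (hca : ContFromAbove ν)
    (ht : 0 < t) {𝓓 : Set (Set E)} (hcount : 𝓓.Countable) (hatom : ∀ A ∈ 𝓓, IsAtomAt ν t A)
    (hmax : ∀ A, IsAtomAt ν t A → (∀ D ∈ 𝓓, Disjoint A D) → A ∈ 𝓓) {B : Set E}
    (hB : MeasurableSet B) (htB : t ≤ ν B) : ∃ A ∈ 𝓓, t ≤ ν (A ∩ B) := by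
  by_contra! hlt
  set L := ⋃₀ 𝓓 with hL
  have hLm : MeasurableSet L := MeasurableSet.sUnion hcount fun A hA => (hatom A hA).1
  have hLB : ν (L ∩ B) < t := by
    rw [hL, sUnion_eq_biUnion, iUnion₂_inter]
    exact hm.measure_biUnion_lt hca hcount (fun A hA => (hatom A hA).1.inter hB) ht hlt
  have htBL : t ≤ ν (B \ L) := by
    have hsplit := hm.2 _ _ (hLm.inter hB) (hB.diff hLm)
    rw [show L ∩ B ∪ B \ L = B by rw [inter_comm, inter_union_sdiff]] at hsplit
    exact (le_max_iff.1 (hsplit ▸ htB)).resolve_left hLB.not_ge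
  obtain ⟨A, hAB, hA⟩ := hm.exists_isAtomAt_subset hca ht (hB.diff hLm) htBL
  have hAL : Disjoint A L := disjoint_sdiff_left.mono_left hAB
  have hA𝓓 : A ∈ 𝓓 := hmax A hA fun D hD => hAL.mono_right (subset_sUnion_of_mem hD)
  have hA_empty : A = ∅ := disjoint_self.1 (hAL.mono_right (subset_sUnion_of_mem hA𝓓))
  exact ht.not_ge (by simpa [hA_empty, hm.1] using hA.2.1)

theorem Maxitive.essential (hm : Maxitive ν) (hca : ContFromAbove ν) : Essential ν := by
  have hlevel : ∀ n : ℕ, 0 < (n : ℝ≥0∞)⁻¹ := fun n => ENNReal.inv_pos.2 (ENNReal.natCast_ne_top n)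
  choose 𝓓 hatom hd hmax using fun n : ℕ =>
    exists_maximal_pairwise_disjoint (IsAtomAt ν (n : ℝ≥0∞)⁻¹)
  have hcount : ∀ n, (𝓓 n).Countable := fun n =>
    hm.ccc hca (𝓓 n) (fun A hA => ⟨(hatom n A hA).1, fun hA0 =>
      (hlevel n).not_ge (((hm.negligible_iff (hatom n A hA).1).1 hA0) ▸ (hatom n A hA).2.1)⟩)
      (hd n)
  have : ∀ n, Countable (𝓓 n) := fun n => (hcount n).to_subtype
  choose μ hμ using fun i : Σ n, 𝓓 n => (hatom i.1 i.2 i.2.2).exists_measure hm hca (hlevel i.1)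
  obtain ⟨w, hw, hw_sum⟩ := ENNReal.exists_pos_sum_of_countable' one_ne_zero (Σ n, 𝓓 n)
  set m := Measure.sum fun i => w i • μ i
  have hm_apply : ∀ B, MeasurableSet B →
      m B = ∑' i, w i * if (i.1 : ℝ≥0∞)⁻¹ ≤ ν (i.2 ∩ B) then 1 else 0 := fun B hB => by
    simp only [m, Measure.sum_apply _ hB, Measure.smul_apply, hμ _ B hB, smul_eq_mul]
  have : IsFiniteMeasure m := ⟨by
    rw [hm_apply _ .univ]
    refine lt_of_le_of_lt (ENNReal.tsum_le_tsum fun i => ?_) (hw_sum.trans ENNReal.one_lt_top)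
    split_ifs <;> simp⟩
  refine ⟨m, inferInstance, fun B hB => ?_⟩
  simp only [hm_apply B hB, pos_iff_ne_zero, ne_eq, ENNReal.tsum_eq_zero, not_forall,
    mul_eq_zero, (hw _).ne', false_or, ite_eq_right_iff, one_ne_zero, imp_false, not_not]
  constructor
  · intro hB0
    obtain ⟨n, hn⟩ := ENNReal.exists_inv_nat_lt hB0
    obtain ⟨A, hA, hAB⟩ := hm.exists_mem_le_measure_inter hca (hlevel n) (hcount n) (hatom n)
      (hmax n) hB hn.le
    exact ⟨⟨n, A, hA⟩, hAB⟩
  · rintro ⟨i, hi⟩ hB0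
    have hAB := hm.mono ((hatom i.1 i.2 i.2.2).1.inter hB) hB inter_subset_right
    exact (hlevel i.1).not_ge (hi.trans (hAB.trans hB0.le))

end Atoms

section LevelDensity

variable {ι : Type*} (r : ι → ℝ≥0∞) (L : ι → Set E)

noncomputable def levelDensity (x : E) : ℝ≥0∞ :=
  ⨅ (i) (_ : x ∈ L i), r i

variable {r L}

theorem levelDensity_lt_iff {x : E} {s : ℝ≥0∞} :
    levelDensity r L x < s ↔ ∃ i, x ∈ L i ∧ r i < s := by
  simp [levelDensity, iInf_lt_iff]

theorem levelDensity_le {x : E} {i : ι} (hx : x ∈ L i) : levelDensity r L x ≤ r i :=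
  iInf₂_le i hx

variable [MeasurableSpace E] {ν : Set E → ℝ≥0∞}

theorem premeasurable_levelDensity [Countable ι] (hL : ∀ i, MeasurableSet (L i)) :
    Premeasurable (levelDensity r L) := by
  have hmeas : Measurable (levelDensity r L) := measurable_of_Iio fun s => by
    have hIio : levelDensity r L ⁻¹' Iio s = ⋃ (i) (_ : r i < s), L i := by
      ext x
      simp [levelDensity_lt_iff, and_comm]
    rw [hIio]
    exact .iUnion fun i => .iUnion fun _ => hL i
  exact fun t => hmeas measurableSet_Ioi

theorem Maxitive.le_essSupOn_levelDensity [Countable ι] (hm : Maxitive ν) (hca : ContFromAbove ν)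
    (hr : ∀ ⦃a b⦄, a < b → ∃ i, a < r i ∧ r i < b) (hLm : ∀ i, MeasurableSet (L i))
    (hL : ∀ i, ν (L i) ≤ r i) {B : Set E} (hB : MeasurableSet B) :
    ν B ≤ essSupOn ν (levelDensity r L) B := by
  refine le_sInf fun t ⟨ht, N, hN, hBN, hN0⟩ => le_of_not_gt fun htB => ?_
  obtain ⟨j, htj, hjB⟩ := hr htB
  set U := ⋃ i ∈ {i | r i < r j}, L i
  have hUm : MeasurableSet U := .biUnion (to_countable _) fun i _ => hLm i
  have hU : ν U < r j :=
    hm.measure_biUnion_lt hca (to_countable _) (fun i _ => hLm i) (ht.trans htj)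
      fun i hi => (hL i).trans_lt hi
  have hcover : B ⊆ N ∪ U := fun x hx => by
    by_cases hfx : t < levelDensity r L x
    · exact Or.inl (hBN ⟨hx, hfx⟩)
    · obtain ⟨i, hi, hij⟩ := levelDensity_lt_iff.1 ((not_lt.1 hfx).trans_lt htj)
      exact Or.inr (mem_biUnion hij hi)
  have hBU : ν B ≤ ν U := by
    simpa [hm.2 _ _ hN hUm, hN0] using hm.mono hB (hN.union hUm) hcover
  exact lt_irrefl _ (hBU.trans_lt (hU.trans hjB))

theorem essSupOn_levelDensity_le (hr : ∀ ⦃a b⦄, a < b → ∃ i, a < r i ∧ r i < b)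
    (hL : ∀ i S, MeasurableSet S → ν S ≤ r i → Negligible ν (S \ L i)) {B : Set E}
    (hB : MeasurableSet B) : essSupOn ν (levelDensity r L) B ≤ ν B := by
  refine le_of_forall_gt fun s hBs => ?_
  obtain ⟨j, hBj, hjs⟩ := hr hBs
  obtain ⟨N, hN, hsub, hN0⟩ := hL j B hB hBj.le
  have hmem : r j ∈ {t | 0 < t ∧ Negligible ν (B ∩ {x | t < levelDensity r L x})} :=
    ⟨zero_le.trans_lt hBj, N, hN, fun x ⟨hxB, hx⟩ =>
      hsub ⟨hxB, fun hxL => (levelDensity_le hxL).not_gt hx⟩, hN0⟩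
  exact (sInf_le hmem).trans_lt hjs

end LevelDensity

namespace Maxitive

variable [MeasurableSpace E] {ν : Set E → ℝ≥0∞}

theorem sigmaIdeal_setOf_measure_le (hm : Maxitive ν) (hca : ContFromAbove ν) (c : ℝ≥0∞) :
    SigmaIdeal {C : Set E | MeasurableSet C ∧ ν C ≤ c} :=
  ⟨⟨∅, .empty, hm.1.le.trans zero_le⟩, fun _ hS => hS.1,
    fun _ hf => ⟨.iUnion fun n => (hf n).1,
      let ⟨i, hi⟩ := hm.exists_measure_iUnion_le hca fun n => (hf n).1; hi.trans (hf i).2⟩,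
    fun _ _ hB hS hBS => ⟨hB, (hm.mono hB hS.1 hBS).trans hS.2⟩⟩

theorem strongAbsCont_self (hm : Maxitive ν) (hca : ContFromAbove ν) (hSP : SigmaPrincipal ν) :
    StrongAbsCont ν ν := by
  choose L hL hL_max using fun q : ℚ =>
    hSP _ (hm.sigmaIdeal_setOf_measure_le hca (ENNReal.ofReal q))
  have hdense : ∀ ⦃a b : ℝ≥0∞⦄, a < b → ∃ q : ℚ, a < ENNReal.ofReal q ∧ ENNReal.ofReal q < b :=
    fun _ _ h => let ⟨q, _, haq, hqb⟩ := ENNReal.lt_iff_exists_rat_btwn.1 h; ⟨q, haq, hqb⟩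
  exact ⟨levelDensity (fun q : ℚ => ENNReal.ofReal q) L,
    premeasurable_levelDensity fun q => (hL q).1, fun B hB => le_antisymm
      (hm.le_essSupOn_levelDensity hca hdense (fun q => (hL q).1) (fun q => (hL q).2) hB)
      (essSupOn_levelDensity_le hdense (fun q S hS hSq => hL_max q S ⟨hS, hSq⟩) hB)⟩

end Maxitive

/-- Every optimal measure is essential; consequently it is σ-principal, satisfies the
countable chain condition, and is autocontinuous. -/
theorem optimal_essential [MeasurableSpace E] (ν : Set E → ℝ≥0∞) (hν : Optimal ν) :
    Essential ν ∧ SigmaPrincipal ν ∧ CCC ν ∧ StrongAbsCont ν ν := by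
  obtain ⟨hm, -, hca⟩ := hν
  have hSP := hm.sigmaPrincipal hca
  exact ⟨hm.essential hca, hSP, hm.ccc hca, hm.strongAbsCont_self hca hSP⟩
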